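/- arXiv:2307.00807 — 6 statements merged into one kernel-verified Lean document; each statement's English description precedes it below -/
import Mathlib

section
/- Let N ≥ 2 and let ν_1, …, ν_N be probability measures on ℝ^d with finite first moments satisfying the convex order relations ν_1 ⪯_c ν_2 ⪯_c … ⪯_c ν_N. For t ∈ {1,…,N} let χ_t : ℝ^d → ℝ be convex functions with χ_1 ≡ 0, and let φ_t : ℝ^d → ℝ be ν_t-integrable functions, such that χ_t + φ_t ≤ χ_{t+1} pointwise for t = 1,…,N−1 and χ_N + φ_N ≤ 0 pointwise; assume each χ_t is integrable with respect to ν_{t−1} and ν_t. Then for every t ∈ {2,…,N}: ∫ χ_t dν_t − ∫ χ_t dν_{t−1} ≤ − Σ_{s=1}^N ∫ φ_s dν_s. -/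
open MeasureTheory Filter

noncomputable section

/-- Convex order for probability measures on ℝ^d. -/
def ConvexOrderD (d : ℕ) (μ ν : Measure (Fin d → ℝ)) : Prop :=
  ∀ f : (Fin d → ℝ) → ℝ, ConvexOn ℝ Set.univ f → Integrable f μ → Integrable f ν →
    ∫ x, f x ∂μ ≤ ∫ x, f x ∂ν

/-- The key integral estimate: for convex functions χ_t and functions φ_t with
χ_t + φ_t ≤ χ_{t+1} and χ_N + φ_N ≤ 0, along a chain of measures in convex order,
∫ χ_t d(ν_t − ν_{t−1}) ≤ − Σ_s ∫ φ_s dν_s. -/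
theorem chi_integral_bound (N d : ℕ) (hN : 2 ≤ N)
    (ν : ℕ → Measure (Fin d → ℝ))
    (hprob : ∀ t, IsProbabilityMeasure (ν t))
    (hmom : ∀ t, Integrable (fun x => ‖x‖) (ν t))
    (hord : ∀ t, 1 ≤ t → t ≤ N - 1 → ConvexOrderD d (ν t) (ν (t + 1)))
    (χ φ : ℕ → (Fin d → ℝ) → ℝ)
    (hχconv : ∀ t, 1 ≤ t → t ≤ N → ConvexOn ℝ Set.univ (χ t))
    (hχ1 : ∀ x, χ 1 x = 0)
    (hφint : ∀ t, 1 ≤ t → t ≤ N → Integrable (φ t) (ν t))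
    (hineq : ∀ t, 1 ≤ t → t ≤ N - 1 → ∀ x, χ t x + φ t x ≤ χ (t + 1) x)
    (hlast : ∀ x, χ N x + φ N x ≤ 0)
    (hχint : ∀ t, 2 ≤ t → t ≤ N → Integrable (χ t) (ν (t - 1)) ∧ Integrable (χ t) (ν t)) :
    ∀ t, 2 ≤ t → t ≤ N →
      (∫ x, χ t x ∂(ν t)) - (∫ x, χ t x ∂(ν (t - 1))) ≤
        - ∑ s ∈ Finset.Icc 1 N, ∫ x, φ s x ∂(ν s) := by
  set A : ℕ → ℝ := fun s => ∫ x, χ s x ∂(ν s) with hA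
  set B : ℕ → ℝ := fun s => ∫ x, χ s x ∂(ν (s - 1)) with hB
  set I : ℕ → ℝ := fun s => ∫ x, φ s x ∂(ν s) with hI
  have hχ1' : χ 1 = fun _ => 0 := funext hχ1
  have hχint' : ∀ s, 1 ≤ s → s ≤ N → Integrable (χ s) (ν s) := by
    intro s h1 h2
    rcases eq_or_lt_of_le h1 with h | h
    · rw [← h, hχ1']; exact integrable_zero _ _ _
    · exact (hχint s h h2).2
  -- step inequality
  have hstep : ∀ s, 1 ≤ s → s ≤ N - 1 → A s + I s ≤ B (s + 1) := by
    intro s h1 h2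
    have hχs : Integrable (χ s) (ν s) := hχint' s h1 (by omega)
    have hφs : Integrable (φ s) (ν s) := hφint s h1 (by omega)
    have hχs1 : Integrable (χ (s + 1)) (ν s) := by
      have := (hχint (s + 1) (by omega) (by omega)).1
      simpa using this
    calc A s + I s = ∫ x, (χ s x + φ s x) ∂(ν s) := (integral_add hχs hφs).symm
      _ ≤ ∫ x, χ (s + 1) x ∂(ν s) :=
        integral_mono (hχs.add hφs) hχs1 (hineq s h1 h2)
      _ = B (s + 1) := by simp [hB]
  have hBA : ∀ s, 2 ≤ s → s ≤ N → B s ≤ A s := by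
    intro s h2 hsN
    have hc := hord (s - 1) (by omega) (by omega)
    have hs : s - 1 + 1 = s := by omega
    rw [hs] at hc
    exact hc (χ s) (hχconv s (by omega) hsN) (hχint s h2 hsN).1 (hχint s h2 hsN).2
  have hlastA : A N + I N ≤ 0 := by
    have hχN : Integrable (χ N) (ν N) := hχint' N (by omega) le_rfl
    have hφN : Integrable (φ N) (ν N) := hφint N (by omega) le_rfl
    calc A N + I N = ∫ x, (χ N x + φ N x) ∂(ν N) := (integral_add hχN hφN).symm
      _ ≤ 0 := integral_nonpos hlast
  have hA1 : A 1 = 0 := by simp [hA, hχ1']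
  -- lower claim
  have hlow : ∀ s, 2 ≤ s → s ≤ N → ∑ k ∈ Finset.Icc 1 (s - 1), I k ≤ B s := by
    intro s
    induction s with
    | zero => omega
    | succ n ih =>
      intro h2 hsN
      rcases Nat.lt_or_ge n 2 with hn | hn
      · have hn1 : n = 1 := by omega
        subst hn1
        simpa [hA1] using hstep 1 le_rfl (by omega)
      · obtain ⟨m, rfl⟩ : ∃ m, n = m + 1 := ⟨n - 1, by omega⟩
        have h1 : ∑ k ∈ Finset.Icc 1 (m + 1 + 1 - 1), I k
            = ∑ k ∈ Finset.Icc 1 (m + 1 - 1), I k + I (m + 1) := by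
          simp only [Nat.add_sub_cancel]
          exact Finset.sum_Icc_succ_top (by omega) _
        rw [h1]
        set n := m + 1 with hn'
        calc ∑ k ∈ Finset.Icc 1 (n - 1), I k + I n
            ≤ B n + I n := by
              have := ih hn (by omega)
              linarith
          _ ≤ A n + I n := by
              have := hBA n hn (by omega); linarith
          _ ≤ B (n + 1) := hstep n (by omega) (by omega)
  -- upper claim
  have hupp : ∀ m s, s + m = N → 2 ≤ s → A s ≤ - ∑ k ∈ Finset.Icc s N, I k := by
    intro m
    induction m with
    | zero =>
      intro s hsN h2
      have hs : s = N := by omega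
      subst hs
      simp only [Finset.Icc_self, Finset.sum_singleton]
      linarith [hlastA]
    | succ m ih =>
      intro s hsN h2
      have hs1 : A (s + 1) ≤ - ∑ k ∈ Finset.Icc (s + 1) N, I k := ih (s + 1) (by omega) (by omega)
      have hsplit : ∑ k ∈ Finset.Icc s N, I k = I s + ∑ k ∈ Finset.Icc (s + 1) N, I k := by
        have : Finset.Icc s N = insert s (Finset.Icc (s + 1) N) := by
          ext k; simp; omega
        rw [this, Finset.sum_insert (by simp)]
      have h3 : A s + I s ≤ B (s + 1) := hstep s (by omega) (by omega)
      have h4 : B (s + 1) ≤ A (s + 1) := hBA (s + 1) (by omega) (by omega)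
      rw [hsplit]
      linarith
  intro t ht2 htN
  have hlo := hlow t ht2 htN
  have hup := hupp (N - t) t (by omega) ht2
  have hsum : ∑ k ∈ Finset.Icc 1 N, I k
      = ∑ k ∈ Finset.Icc 1 (t - 1), I k + ∑ k ∈ Finset.Icc t N, I k := by
    have e1 : Finset.Icc 1 (t - 1) = Finset.Ioc 0 (t - 1) := by ext k; simp; omega
    have e2 : Finset.Icc t N = Finset.Ioc (t - 1) N := by ext k; simp; omega
    have e3 : Finset.Icc 1 N = Finset.Ioc 0 N := by ext k; simp; omega
    rw [e1, e2, e3, Finset.sum_Ioc_consecutive _ (by omega : (0:ℕ) ≤ t - 1) (by omega : t - 1 ≤ N)]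
  show A t - B t ≤ - ∑ k ∈ Finset.Icc 1 N, I k
  rw [hsum]
  linarith
end
end

section
/- Let d ≥ 1 and for each i ∈ {1,…,d} let μ_i, ν_i be probability measures on ℝ with finite first moments such that μ_i ⪯_c ν_i in convex order. Then the product measures satisfy μ_1 ⊗ … ⊗ μ_d ⪯_c ν_1 ⊗ … ⊗ ν_d in convex order on ℝ^d, i.e., ∫ f d(μ_1 ⊗ … ⊗ μ_d) ≤ ∫ f d(ν_1 ⊗ … ⊗ ν_d) for every convex function f : ℝ^d → ℝ integrable with respect to both product measures. -/
/-!
A convex `f` is the increasing limit of maxima of finitely many supporting affine functions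
(taken at a dense sequence of points); these are convex of linear growth, so by monotone
convergence it suffices to compare integrals of convex functions of linear growth. For those,
Fubini lets one replace the factors of the product one at a time: integrating a convex function of
linear growth in one variable gives a convex function of linear growth in the others.
-/

open MeasureTheory

noncomputable section

/-- Convex order for probability measures on ℝ. -/
def ConvexOrder1 (μ ν : Measure ℝ) : Prop :=
  ∀ f : ℝ → ℝ, ConvexOn ℝ Set.univ f → Integrable f μ → Integrable f ν →
    ∫ x, f x ∂μ ≤ ∫ x, f x ∂ν

open Set Filter Topology

variable {E F : Type*} [NormedAddCommGroup E] [NormedAddCommGroup F]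

def HasLinearGrowth (f : E → ℝ) : Prop :=
  ∃ C, 0 ≤ C ∧ ∀ x, |f x| ≤ C * (1 + ‖x‖)

namespace HasLinearGrowth

lemma sup {f g : E → ℝ} (hf : HasLinearGrowth f) (hg : HasLinearGrowth g) :
    HasLinearGrowth (f ⊔ g) := by
  obtain ⟨C, hC, hfC⟩ := hf
  obtain ⟨D, -, hgD⟩ := hg
  refine ⟨max C D, le_max_of_le_left hC, fun x => ?_⟩
  calc |(f ⊔ g) x| ≤ max |f x| |g x| := abs_max_le_max_abs_abs
    _ ≤ max C D * (1 + ‖x‖) := max_le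
        ((hfC x).trans (by gcongr; exact le_max_left C D))
        ((hgD x).trans (by gcongr; exact le_max_right C D))

lemma comp [NormedSpace ℝ E] [NormedSpace ℝ F] {f : E → ℝ} (hf : HasLinearGrowth f)
    (L : F →L[ℝ] E) : HasLinearGrowth (f ∘ L) := by
  obtain ⟨C, hC, hfC⟩ := hf
  refine ⟨C * max 1 ‖L‖, by positivity, fun x => ?_⟩
  calc |f (L x)| ≤ C * (1 + ‖L‖ * ‖x‖) := (hfC _).trans (by gcongr; exact L.le_opNorm x)
    _ ≤ C * (max 1 ‖L‖ * (1 + ‖x‖)) := by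
        gcongr
        nlinarith [le_max_left 1 ‖L‖, le_max_right 1 ‖L‖, norm_nonneg x]
    _ = C * max 1 ‖L‖ * (1 + ‖x‖) := (mul_assoc ..).symm

lemma exists_bound_prod {f : E × F → ℝ} (hf : HasLinearGrowth f) :
    ∃ C, 0 ≤ C ∧ ∀ x y, |f (x, y)| ≤ C * (1 + ‖x‖) * (1 + ‖y‖) := by
  obtain ⟨C, hC, hfC⟩ := hf
  refine ⟨C, hC, fun x y => (hfC _).trans ?_⟩
  rw [mul_assoc, Prod.norm_mk]
  gcongr
  nlinarith [norm_nonneg x, norm_nonneg y, max_le_add_of_nonneg (norm_nonneg x) (norm_nonneg y)]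

end HasLinearGrowth

lemma hasLinearGrowth_affine [NormedSpace ℝ E] (L : E →L[ℝ] ℝ) (c : ℝ) :
    HasLinearGrowth fun x => L x + c := by
  refine ⟨max ‖L‖ |c|, le_max_of_le_right (abs_nonneg c), fun x => ?_⟩
  calc |L x + c| ≤ ‖L‖ * ‖x‖ + |c| :=
        (abs_add_le _ _).trans (by gcongr; exact L.le_opNorm x)
    _ ≤ max ‖L‖ |c| * (1 + ‖x‖) := by
        nlinarith [le_max_left ‖L‖ |c|, le_max_right ‖L‖ |c|, norm_nonneg x]

theorem MeasureTheory.Measure.pi_eq_map_finCons {n : ℕ} {α : Type*} [MeasurableSpace α]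
    (μ : Fin (n + 1) → Measure α) [∀ i, SigmaFinite (μ i)] :
    Measure.pi μ =
      ((μ 0).prod (Measure.pi fun j => μ j.succ)).map fun p => Fin.cons p.1 p.2 := by
  rw [← (measurePreserving_piFinSuccAbove μ 0).symm.map_eq]
  congr 1
  ext p : 1
  simp [MeasurableEquiv.piFinSuccAbove_symm_apply, Fin.insertNthEquiv]

section Moments

variable [MeasurableSpace E] [MeasurableSpace F]

theorem HasLinearGrowth.integrable {f : E → ℝ} {μ : Measure E} [IsFiniteMeasure μ]
    (hf : HasLinearGrowth f) (hfm : AEStronglyMeasurable f μ) (hμ : Integrable id μ) :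
    Integrable f μ := by
  obtain ⟨C, -, hC⟩ := hf
  exact (((integrable_const 1).add hμ.norm).const_mul C).mono' hfm (ae_of_all _ hC)

lemma integrable_id_prod {μ : Measure E} {ν : Measure F} [IsFiniteMeasure μ] [IsFiniteMeasure ν]
    (hμ : Integrable id μ) (hν : Integrable id ν) : Integrable id (μ.prod ν) :=
  (hμ.comp_fst ν).prodMk (hν.comp_snd μ)

lemma integrable_id_pi {ι : Type*} [Fintype ι] {μ : ι → Measure E}
    [∀ i, IsProbabilityMeasure (μ i)] (hμ : ∀ i, Integrable id (μ i)) :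
    Integrable id (Measure.pi μ) :=
  integrable_pi_iff.2 fun i => (measurePreserving_eval μ i).integrable_comp_of_integrable (hμ i)

end Moments

section Convex

variable [NormedSpace ℝ E] [NormedSpace ℝ F]

theorem ConvexOn.exists_subgradient {f : E → ℝ} (hf : ConvexOn ℝ univ f) (hc : Continuous f)
    (x : E) : ∃ L : E →L[ℝ] ℝ, ∀ y, f x + L (y - x) ≤ f y := by
  obtain ⟨ℓ, hℓ⟩ := geometric_hahn_banach_open_point hf.convex_strict_epigraph
    (by simpa using isOpen_lt (hc.comp continuous_fst) continuous_snd)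
    (show (x, f x) ∉ {p : E × ℝ | p.1 ∈ univ ∧ f p.1 < p.2} by simp)
  set φ := ℓ.comp (ContinuousLinearMap.inl ℝ E ℝ)
  set β := ℓ (0, 1)
  have hdecomp : ∀ y t, ℓ (y, t) = φ y + t * β := fun y t => by
    rw [show ((y, t) : E × ℝ) = (y, 0) + t • (0, 1) by simp, map_add, map_smul, smul_eq_mul]
    rfl
  have hlt : ∀ y t, f y < t → φ y + t * β < φ x + f x * β := fun y t h => by
    simpa only [hdecomp] using hℓ (y, t) ⟨mem_univ y, h⟩
  have hβ : β < 0 := by linarith [hlt x (f x + 1) (by linarith)]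
  have hsupport : ∀ y, φ y + f y * β ≤ φ x + f x * β := fun y =>
    le_of_forall_pos_lt_add fun ε hε => by
      have h := hlt y (f y + ε / -β) (by linarith [div_pos hε (neg_pos.2 hβ)])
      have hε' : (f y + ε / -β) * β = f y * β - ε := by field_simp [hβ.ne]; ring
      linarith
  refine ⟨(-β)⁻¹ • φ, fun y => ?_⟩
  have hφ : φ (y - x) ≤ -β * (f y - f x) := by rw [map_sub]; linarith [hsupport y]
  have : (-β)⁻¹ * φ (y - x) ≤ f y - f x := (inv_mul_le_iff₀ (by linarith)).2 hφ
  show f x + (-β)⁻¹ * φ (y - x) ≤ f y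
  linarith

theorem ConvexOn.exists_hasLinearGrowth_monotone_tendsto [TopologicalSpace.SeparableSpace E]
    {f : E → ℝ} (hf : ConvexOn ℝ univ f) (hc : Continuous f) :
    ∃ F : ℕ → E → ℝ, Monotone F ∧ (∀ n, ConvexOn ℝ univ (F n) ∧ HasLinearGrowth (F n)) ∧
      ∀ x, Tendsto (fun n => F n x) atTop (𝓝 (f x)) := by
  obtain ⟨q, hq⟩ := TopologicalSpace.exists_dense_seq E
  choose L hL using fun n => hf.exists_subgradient hc (q n)
  set ℓ : ℕ → E → ℝ := fun n y => L n y + (f (q n) - L n (q n))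
  have hℓ_eq : ∀ n y, ℓ n y = f (q n) + L n (y - q n) := fun n y => by
    simp only [ℓ, map_sub]; ring
  have hℓf : ∀ n, ℓ n ≤ f := fun n y => (hℓ_eq n y).trans_le (hL n y)
  -- `ℓ m x ≥ 2 f (q m) - f (2 q m - x)`, and the right side tends to `f x` as `q m → x`
  have hℓ_approx : ∀ x, ∀ a < f x, ∃ m, a < ℓ m x := fun x a ha => by
    have hU : IsOpen {z | a < 2 * f z - f ((2 : ℝ) • z - x)} :=
      isOpen_lt continuous_const (by fun_prop)
    obtain ⟨m, hm⟩ := hq.exists_mem_open hU ⟨x, by simpa [two_smul] using by linarith⟩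
    have h := hL m ((2 : ℝ) • q m - x)
    rw [show (2 : ℝ) • q m - x - q m = -(x - q m) by module, map_neg] at h
    exact ⟨m, hm.trans_le (by rw [hℓ_eq]; linarith)⟩
  refine ⟨partialSups ℓ, (partialSups ℓ).monotone, fun n => ?_, fun x => ?_⟩
  · rw [partialSups_eq_sup'_range]
    exact Finset.sup'_induction (p := fun g => ConvexOn ℝ univ g ∧ HasLinearGrowth g) _ _
      (fun g hg g' hg' => ⟨hg.1.sup hg'.1, hg.2.sup hg'.2⟩) fun k _ =>
        ⟨((L k).toLinearMap.convexOn convex_univ).add_const _, hasLinearGrowth_affine (L k) _⟩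
  refine tendsto_order.2 ⟨fun a ha => ?_, fun a ha => Eventually.of_forall fun n => ?_⟩
  · obtain ⟨m, hm⟩ := hℓ_approx x a ha
    exact eventually_atTop.2 ⟨m, fun n hn => hm.trans_le (le_partialSups_of_le ℓ hn x)⟩
  · exact (partialSups_le ℓ n f fun k _ => hℓf k) x |>.trans_lt ha

lemma ConvexOn.comp_continuousLinearMap {f : E → ℝ} (hf : ConvexOn ℝ univ f) (L : F →L[ℝ] E) :
    ConvexOn ℝ univ (f ∘ L) := by
  simpa using hf.comp_linearMap (L : F →ₗ[ℝ] E)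

theorem ConvexOn.continuous [FiniteDimensional ℝ E] {f : E → ℝ}
    (hf : ConvexOn ℝ univ f) : Continuous f :=
  continuousOn_univ.1 (hf.continuousOn isOpen_univ)

lemma ConvexOn.integral_prodMk [FiniteDimensional ℝ E] [FiniteDimensional ℝ F]
    [MeasurableSpace F] [BorelSpace F] {f : E × F → ℝ} (hf : ConvexOn ℝ univ f)
    (hlin : HasLinearGrowth f) {ν : Measure F} [IsFiniteMeasure ν] (hν : Integrable id ν) :
    ConvexOn ℝ univ (fun x => ∫ y, f (x, y) ∂ν) ∧ HasLinearGrowth (fun x => ∫ y, f (x, y) ∂ν) := by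
  obtain ⟨C, hC, hfC⟩ := hlin.exists_bound_prod
  have hint : ∀ x, Integrable (fun y => f (x, y)) ν := fun x =>
    HasLinearGrowth.integrable ⟨C * (1 + ‖x‖), by positivity, hfC x⟩
      (hf.continuous.comp (Continuous.prodMk_right x)).aestronglyMeasurable hν
  refine ⟨integral_convexOn_of_integrand_ae convex_univ (ae_of_all _ fun y => ?_)
    (fun x _ => hint x), C * ∫ y, (1 + ‖y‖) ∂ν, ?_, fun x => ?_⟩
  · refine ⟨convex_univ, fun x _ x' _ a b ha hb hab => ?_⟩
    simpa [Convex.combo_self hab] using hf.2 (mem_univ (x, y)) (mem_univ (x', y)) ha hb hab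
  · exact mul_nonneg hC (integral_nonneg fun y => by positivity)
  have hbound : Integrable (fun y => C * (1 + ‖x‖) * (1 + ‖y‖)) ν :=
    ((integrable_const 1).add hν.norm).const_mul _
  calc |∫ y, f (x, y) ∂ν| ≤ ∫ y, C * (1 + ‖x‖) * (1 + ‖y‖) ∂ν :=
        abs_integral_le_integral_abs.trans (integral_mono (hint x).abs hbound (hfC x))
    _ = C * (∫ y, (1 + ‖y‖) ∂ν) * (1 + ‖x‖) := by rw [integral_const_mul]; ring

def LinearGrowthConvexOrder [MeasurableSpace E] (μ ν : Measure E) : Prop :=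
  ∀ f : E → ℝ, ConvexOn ℝ univ f → HasLinearGrowth f → ∫ x, f x ∂μ ≤ ∫ x, f x ∂ν

namespace LinearGrowthConvexOrder

variable [MeasurableSpace E] [MeasurableSpace F] [FiniteDimensional ℝ F]
  [BorelSpace E] [BorelSpace F]

theorem map {μ ν : Measure E} (h : LinearGrowthConvexOrder μ ν) (L : E →L[ℝ] F) :
    LinearGrowthConvexOrder (μ.map L) (ν.map L) := by
  intro f hf hlin
  rw [integral_map L.continuous.aemeasurable hf.continuous.aestronglyMeasurable,
    integral_map L.continuous.aemeasurable hf.continuous.aestronglyMeasurable]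
  exact h (f ∘ L) (hf.comp_continuousLinearMap L) (hlin.comp L)

theorem prod [FiniteDimensional ℝ E] {μ ν : Measure E} {μ' ν' : Measure F}
    [IsFiniteMeasure μ] [IsFiniteMeasure ν] [IsFiniteMeasure μ'] [IsFiniteMeasure ν']
    (h : LinearGrowthConvexOrder μ ν) (h' : LinearGrowthConvexOrder μ' ν')
    (hμ : Integrable id μ) (hν : Integrable id ν) (hμ' : Integrable id μ')
    (hν' : Integrable id ν') : LinearGrowthConvexOrder (μ.prod μ') (ν.prod ν') := by
  intro f hf hlin
  have hint : ∀ (ρ : Measure E) (ρ' : Measure F) [IsFiniteMeasure ρ] [IsFiniteMeasure ρ'],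
      Integrable id ρ → Integrable id ρ' → Integrable f (ρ.prod ρ') := fun ρ ρ' _ _ hρ hρ' =>
    hlin.integrable hf.continuous.aestronglyMeasurable (integrable_id_prod hρ hρ')
  let swap : F × E →L[ℝ] E × F := ContinuousLinearEquiv.prodComm ℝ F E
  obtain ⟨hG, hGlin⟩ := hf.integral_prodMk hlin hμ'
  obtain ⟨hH, hHlin⟩ := (hf.comp_continuousLinearMap swap).integral_prodMk (hlin.comp swap) hν
  calc ∫ p, f p ∂μ.prod μ' = ∫ x, ∫ y, f (x, y) ∂μ' ∂μ := integral_prod f (hint μ μ' hμ hμ')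
    _ ≤ ∫ x, ∫ y, f (x, y) ∂μ' ∂ν := h _ hG hGlin
    _ = ∫ y, ∫ x, f (x, y) ∂ν ∂μ' := by
      rw [← integral_prod f (hint ν μ' hν hμ'), integral_prod_symm f (hint ν μ' hν hμ')]
    _ ≤ ∫ y, ∫ x, f (x, y) ∂ν ∂ν' := h' _ hH hHlin
    _ = ∫ p, f p ∂ν.prod ν' := (integral_prod_symm f (hint ν ν' hν hν')).symm

theorem integral_le [FiniteDimensional ℝ E] {μ ν : Measure E} [IsFiniteMeasure μ]
    [IsFiniteMeasure ν] (h : LinearGrowthConvexOrder μ ν) (hμ : Integrable id μ)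
    (hν : Integrable id ν) {f : E → ℝ} (hf : ConvexOn ℝ univ f) (hfμ : Integrable f μ)
    (hfν : Integrable f ν) : ∫ x, f x ∂μ ≤ ∫ x, f x ∂ν := by
  obtain ⟨F, hmono, hF, htend⟩ := hf.exists_hasLinearGrowth_monotone_tendsto hf.continuous
  have hlim : ∀ (ρ : Measure E) [IsFiniteMeasure ρ], Integrable id ρ → Integrable f ρ →
      Tendsto (fun n => ∫ x, F n x ∂ρ) atTop (𝓝 (∫ x, f x ∂ρ)) := fun ρ _ hρ hfρ =>
    integral_tendsto_of_tendsto_of_monotone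
      (fun n => (hF n).2.integrable (hF n).1.continuous.aestronglyMeasurable hρ) hfρ
      (ae_of_all _ fun x _ _ hmn => hmono hmn x) (ae_of_all _ htend)
  exact le_of_tendsto_of_tendsto' (hlim μ hμ hfμ) (hlim ν hν hfν) fun n => h _ (hF n).1 (hF n).2

theorem pi [FiniteDimensional ℝ E] :
    ∀ {n : ℕ} {μ ν : Fin n → Measure E} [∀ i, IsProbabilityMeasure (μ i)]
      [∀ i, IsProbabilityMeasure (ν i)], (∀ i, Integrable id (μ i)) → (∀ i, Integrable id (ν i)) →
      (∀ i, LinearGrowthConvexOrder (μ i) (ν i)) →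
      LinearGrowthConvexOrder (Measure.pi μ) (Measure.pi ν)
  | 0, μ, ν, _, _, _, _, _ => fun f _ _ => by rw [Measure.pi_of_empty μ, Measure.pi_of_empty ν]
  | n + 1, μ, ν, _, _, hμ, hν, h => by
    rw [Measure.pi_eq_map_finCons μ, Measure.pi_eq_map_finCons ν]
    exact ((h 0).prod (pi (fun i => hμ _) (fun i => hν _) fun i => h _) (hμ 0) (hν 0)
      (integrable_id_pi fun i => hμ _) (integrable_id_pi fun i => hν _)).map
      (Fin.consEquivL ℝ fun _ : Fin (n + 1) => E : E × (Fin n → E) →L[ℝ] Fin (n + 1) → E)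

end LinearGrowthConvexOrder

end Convex

theorem product_convex_order_general (d : ℕ)
    (μ ν : Fin d → Measure ℝ)
    (hμ : ∀ i, IsProbabilityMeasure (μ i)) (hν : ∀ i, IsProbabilityMeasure (ν i))
    (hμm : ∀ i, Integrable id (μ i)) (hνm : ∀ i, Integrable id (ν i))
    (hord : ∀ i, ConvexOrder1 (μ i) (ν i)) :
    ConvexOrderD d (Measure.pi μ) (Measure.pi ν) := by
  have hlin : ∀ i, LinearGrowthConvexOrder (μ i) (ν i) := fun i f hf hfl =>
    hord i f hf (hfl.integrable hf.continuous.aestronglyMeasurable (hμm i))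
      (hfl.integrable hf.continuous.aestronglyMeasurable (hνm i))
  exact fun f hf => (LinearGrowthConvexOrder.pi hμm hνm hlin).integral_le
    (integrable_id_pi hμm) (integrable_id_pi hνm) hf

/-- Coordinatewise convex order of one-dimensional marginals implies convex order
of the product measures on ℝ^d. -/
theorem product_convex_order (d : ℕ) (hd : 1 ≤ d)
    (μ ν : Fin d → Measure ℝ)
    (hμ : ∀ i, IsProbabilityMeasure (μ i)) (hν : ∀ i, IsProbabilityMeasure (ν i))
    (hμm : ∀ i, Integrable id (μ i)) (hνm : ∀ i, Integrable id (ν i))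
    (hord : ∀ i, ConvexOrder1 (μ i) (ν i)) :
    ConvexOrderD d (Measure.pi μ) (Measure.pi ν) :=
  product_convex_order_general d μ ν hμ hν hμm hνm hord
end
end

section
/- Let N ≥ 2 and let ν_1, …, ν_N be probability measures on ℝ^d with finite first moments satisfying ν_1 ⪯_c ν_2 ⪯_c … ⪯_c ν_N in convex order. For t ∈ {1,…,N} let χ_t : ℝ^d → ℝ be convex functions with χ_1 ≡ 0, integrable with respect to ν_{t−1} and ν_t, and let φ_t : ℝ^d → ℝ be ν_t-integrable, such that χ_t + φ_t ≤ χ_{t+1} pointwise for t = 1,…,N−1 and χ_N + φ_N ≤ 0 pointwise. Then Σ_{s=2}^N ‖χ_s − χ_{s−1} − φ_{s−1}‖_{L¹(ν_{s−1})} ≤ − Σ_{s=1}^N ∫ φ_s dν_s, and also ‖χ_N + φ_N‖_{L¹(ν_N)} ≤ − Σ_{s=1}^N ∫ φ_s dν_s. -/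
open MeasureTheory Filter

noncomputable section

lemma tele_aux (F a : ℕ → ℝ) (N : ℕ) (hN : 2 ≤ N) :
    ∑ s ∈ Finset.Icc 2 N, (F s - F (s - 1) - a (s - 1))
      = F N - F 1 - ∑ s ∈ Finset.Icc 1 (N - 1), a s := by
  induction N, hN using Nat.le_induction with
  | base => norm_num
  | succ n hn ih =>
    rw [Finset.sum_Icc_succ_top (by omega : 2 ≤ n + 1), ih]
    have h1 : n + 1 - 1 = n := by omega
    have h2 : n - 1 + 1 = n := by omega
    rw [h1]
    rw [← h2, Finset.sum_Icc_succ_top (by omega : 1 ≤ n - 1 + 1), h2]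
    ring

/-- Uniform L¹ bounds: Σ_{s=2}^N ‖χ_s − χ_{s−1} − φ_{s−1}‖_{L¹(ν_{s−1})} and
‖χ_N + φ_N‖_{L¹(ν_N)} are bounded by − Σ_s ∫ φ_s dν_s. -/
theorem chi_L1_bound (N d : ℕ) (hN : 2 ≤ N)
    (ν : ℕ → Measure (Fin d → ℝ))
    (hprob : ∀ t, IsProbabilityMeasure (ν t))
    (hmom : ∀ t, Integrable (fun x => ‖x‖) (ν t))
    (hord : ∀ t, 1 ≤ t → t ≤ N - 1 → ConvexOrderD d (ν t) (ν (t + 1)))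
    (χ φ : ℕ → (Fin d → ℝ) → ℝ)
    (hχconv : ∀ t, 1 ≤ t → t ≤ N → ConvexOn ℝ Set.univ (χ t))
    (hχ1 : ∀ x, χ 1 x = 0)
    (hχint : ∀ t, 2 ≤ t → t ≤ N → Integrable (χ t) (ν (t - 1)) ∧ Integrable (χ t) (ν t))
    (hφint : ∀ t, 1 ≤ t → t ≤ N → Integrable (φ t) (ν t))
    (hineq : ∀ t, 1 ≤ t → t ≤ N - 1 → ∀ x, χ t x + φ t x ≤ χ (t + 1) x)
    (hlast : ∀ x, χ N x + φ N x ≤ 0) :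
    (∑ s ∈ Finset.Icc 2 N, ∫ x, |χ s x - χ (s - 1) x - φ (s - 1) x| ∂(ν (s - 1))) ≤
      - ∑ s ∈ Finset.Icc 1 N, ∫ x, φ s x ∂(ν s) ∧
    (∫ x, |χ N x + φ N x| ∂(ν N)) ≤ - ∑ s ∈ Finset.Icc 1 N, ∫ x, φ s x ∂(ν s) := by
  haveI := hprob
  set F : ℕ → ℝ := fun t => ∫ x, χ t x ∂(ν t) with hF
  set a : ℕ → ℝ := fun t => ∫ x, φ t x ∂(ν t) with ha
  have hχ1' : χ 1 = fun _ => 0 := funext hχ1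
  have hF1 : F 1 = 0 := by simp [hF, hχ1']
  -- integrability of χ (s-1) w.r.t. ν (s-1) for 2 ≤ s ≤ N
  have hχprev : ∀ s, 2 ≤ s → s ≤ N → Integrable (χ (s - 1)) (ν (s - 1)) := by
    intro s hs2 hsN
    rcases eq_or_lt_of_le hs2 with h | h
    · rw [← h]; norm_num [hχ1']
    · exact (hχint (s - 1) (by omega) (by omega)).2
  -- the key pointwise inequality for s ∈ [2, N]
  have hpoint : ∀ s, 2 ≤ s → s ≤ N → ∀ x, χ (s - 1) x + φ (s - 1) x ≤ χ s x := by
    intro s hs2 hsN x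
    have h := hineq (s - 1) (by omega) (by omega) x
    rwa [show s - 1 + 1 = s by omega] at h
  -- per-term bound
  have hterm : ∀ s ∈ Finset.Icc 2 N,
      (∫ x, |χ s x - χ (s - 1) x - φ (s - 1) x| ∂(ν (s - 1)))
        ≤ F s - F (s - 1) - a (s - 1) := by
    intro s hs
    rw [Finset.mem_Icc] at hs
    obtain ⟨hs2, hsN⟩ := hs
    have hχs1 : Integrable (χ s) (ν (s - 1)) := (hχint s hs2 hsN).1
    have hχs2 : Integrable (χ s) (ν s) := (hχint s hs2 hsN).2
    have hχp : Integrable (χ (s - 1)) (ν (s - 1)) := hχprev s hs2 hsN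
    have hφp : Integrable (φ (s - 1)) (ν (s - 1)) :=
      hφint (s - 1) (by omega) (by omega)
    have habs : (∫ x, |χ s x - χ (s - 1) x - φ (s - 1) x| ∂(ν (s - 1)))
        = ∫ x, (χ s x - χ (s - 1) x - φ (s - 1) x) ∂(ν (s - 1)) := by
      refine integral_congr_ae (Filter.Eventually.of_forall fun x => ?_)
      have := hpoint s hs2 hsN x
      exact abs_of_nonneg (by linarith)
    have hsub : Integrable (fun x => χ s x - χ (s - 1) x) (ν (s - 1)) := hχs1.sub hχp
    rw [habs, integral_sub hsub hφp, integral_sub hχs1 hχp]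
    have hcmp : (∫ x, χ s x ∂(ν (s - 1))) ≤ F s := by
      have hord' := hord (s - 1) (by omega) (by omega)
      rw [show s - 1 + 1 = s by omega] at hord'
      exact hord' (χ s) (hχconv s (by omega) hsN) hχs1 hχs2
    simp only [F, a]
    linarith
  have hkey : (∑ s ∈ Finset.Icc 2 N, ∫ x, |χ s x - χ (s - 1) x - φ (s - 1) x| ∂(ν (s - 1)))
      ≤ F N - ∑ s ∈ Finset.Icc 1 (N - 1), a s := by
    calc _ ≤ ∑ s ∈ Finset.Icc 2 N, (F s - F (s - 1) - a (s - 1)) :=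
          Finset.sum_le_sum hterm
      _ = F N - F 1 - ∑ s ∈ Finset.Icc 1 (N - 1), a s := tele_aux F a N hN
      _ = F N - ∑ s ∈ Finset.Icc 1 (N - 1), a s := by rw [hF1]; ring
  have hsum_split : (∑ s ∈ Finset.Icc 1 N, a s)
      = (∑ s ∈ Finset.Icc 1 (N - 1), a s) + a N := by
    rw [show N = N - 1 + 1 by omega, Finset.sum_Icc_succ_top (by omega : 1 ≤ N - 1 + 1)]
    rw [show N - 1 + 1 - 1 = N - 1 by omega]
  have hχNint : Integrable (χ N) (ν N) := (hχint N hN le_rfl).2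
  have hφNint : Integrable (φ N) (ν N) := hφint N (by omega) le_rfl
  -- F N + a N ≤ 0
  have hFaN : F N + a N ≤ 0 := by
    have : (∫ x, (χ N x + φ N x) ∂(ν N)) ≤ ∫ _x, (0 : ℝ) ∂(ν N) :=
      integral_mono (hχNint.add hφNint) (integrable_const 0) hlast
    rw [integral_add hχNint hφNint] at this
    simpa using this
  -- nonnegativity of each |·| integral
  have hnn : ∀ s ∈ Finset.Icc 2 N,
      (0 : ℝ) ≤ ∫ x, |χ s x - χ (s - 1) x - φ (s - 1) x| ∂(ν (s - 1)) :=
    fun s _ => integral_nonneg fun x => abs_nonneg _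
  have hFN_ge : (∑ s ∈ Finset.Icc 1 (N - 1), a s) ≤ F N := by
    have h0 : (0 : ℝ) ≤ ∑ s ∈ Finset.Icc 2 N,
        ∫ x, |χ s x - χ (s - 1) x - φ (s - 1) x| ∂(ν (s - 1)) :=
      Finset.sum_nonneg hnn
    linarith
  constructor
  · calc (∑ s ∈ Finset.Icc 2 N, ∫ x, |χ s x - χ (s - 1) x - φ (s - 1) x| ∂(ν (s - 1)))
        ≤ F N - ∑ s ∈ Finset.Icc 1 (N - 1), a s := hkey
      _ ≤ - ∑ s ∈ Finset.Icc 1 N, ∫ x, φ s x ∂(ν s) := by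
          rw [show (∑ s ∈ Finset.Icc 1 N, ∫ x, φ s x ∂(ν s)) = ∑ s ∈ Finset.Icc 1 N, a s
            from rfl, hsum_split]
          linarith
  · have habsN : (∫ x, |χ N x + φ N x| ∂(ν N)) = -(F N + a N) := by
      have : (∫ x, |χ N x + φ N x| ∂(ν N)) = ∫ x, -(χ N x + φ N x) ∂(ν N) := by
        refine integral_congr_ae (Filter.Eventually.of_forall fun x => ?_)
        exact abs_of_nonpos (hlast x)
      rw [this, integral_neg, integral_add hχNint hφNint]
    rw [habsN, show (∑ s ∈ Finset.Icc 1 N, ∫ x, φ s x ∂(ν s)) = ∑ s ∈ Finset.Icc 1 N, a s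
      from rfl, hsum_split]
    linarith
end
end

section
/- Let d ≥ 1, let μ_1, …, μ_d be probability measures on ℝ, and let K_1, …, K_d ⊂ ℝ be sets with μ_i(K_i) = 1 for each i. Let f_i : ℝ → ℝ be μ_i-integrable functions, and suppose there exist constants M and C with Σ_{i=1}^d f_i(y_i) ≤ M for every (y_1,…,y_d) ∈ K_1 × … × K_d, and ∫ |Σ_{i=1}^d f_i(y_i)| d(μ_1 ⊗ … ⊗ μ_d)(y) ≤ C. Set v_i = ∫ f_i dμ_i. Then there exists a constant C′ depending only on C, M and d (and not on the functions f_i or the measures μ_i) such that ‖f_i − v_i‖_{L¹(μ_i)} ≤ C′ for every i ∈ {1,…,d}. -/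
open MeasureTheory

noncomputable section

/-- Evaluation at a coordinate is measure preserving for products of probability measures. -/
lemma aux_measurePreserving_eval {d : ℕ} (μ : Fin d → Measure ℝ)
    [∀ i, IsProbabilityMeasure (μ i)] (i : Fin d) :
    MeasurePreserving (Function.eval i) (Measure.pi μ) (μ i) := by
  refine ⟨measurable_pi_apply i, ?_⟩
  ext s hs
  rw [Measure.map_apply (measurable_pi_apply i) hs, Set.eval_preimage, Measure.pi_pi]
  rw [Finset.prod_eq_single i]
  · simp
  · intro j _ hj; simp [Function.update_of_ne hj]
  · simp

/-- If a null-measurable property holds on a set of full (outer) measure, it holds a.e. -/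
lemma aux_ae_of_full {μ : Measure ℝ} [IsProbabilityMeasure μ] {K : Set ℝ}
    (hK : μ K = 1) {p : ℝ → Prop} (hp : NullMeasurableSet {x | p x} μ)
    (h : ∀ x ∈ K, p x) : ∀ᵐ x ∂μ, p x := by
  have hsub : K ⊆ {x | p x} := fun x hx => h x hx
  have h1 : μ {x | p x} = 1 :=
    le_antisymm prob_le_one (hK ▸ measure_mono hsub)
  have hc : μ {x | p x}ᶜ = 0 := by
    rw [measure_compl₀ hp (by simp), h1, measure_univ, tsub_self]
  exact hc

/-- A uniform L¹-centering bound: if a sum Σ_i f_i(y_i) is bounded above on a product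
of full-measure sets and has product-integral of its absolute value bounded by C, then
each f_i is at uniformly bounded L¹-distance from its mean, with a constant depending
only on C, M and d. -/
theorem uniform_L1_centering (d : ℕ) (hd : 1 ≤ d) (C M : ℝ) :
    ∃ C' : ℝ, ∀ μ : Fin d → Measure ℝ, (∀ i, IsProbabilityMeasure (μ i)) →
      ∀ K : Fin d → Set ℝ, (∀ i, μ i (K i) = 1) →
      ∀ f : Fin d → ℝ → ℝ, (∀ i, Integrable (f i) (μ i)) →
      (∀ y : Fin d → ℝ, (∀ i, y i ∈ K i) → ∑ i, f i (y i) ≤ M) →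
      (∫ y, |∑ i, f i (y i)| ∂(Measure.pi μ)) ≤ C →
      ∀ i, ∫ x, |f i x - ∫ z, f i z ∂(μ i)| ∂(μ i) ≤ C' := by
  refine ⟨2 * (M + C), ?_⟩
  intro μ hμ K hK f hf hbound hC i
  haveI : ∀ j, IsProbabilityMeasure (μ j) := hμ
  set v : Fin d → ℝ := fun j => ∫ z, f j z ∂(μ j) with hvdef
  -- Step 1: in each K j there is a point where f j is at least its mean
  have hy : ∀ j, ∃ x ∈ K j, v j ≤ f j x := by
    intro j
    by_contra hcon
    push_neg at hcon
    -- then a.e. f j x < v j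
    have hns : NullMeasurableSet {x | f j x < v j} (μ j) := by
      rcases (hf j).1 with hsm
      exact (hsm.aemeasurable.nullMeasurable) measurableSet_Iio
    have hae : ∀ᵐ x ∂(μ j), f j x < v j :=
      aux_ae_of_full (hK j) hns (fun x hx => hcon x hx)
    have hint : Integrable (fun x => v j - f j x) (μ j) := (integrable_const _).sub (hf j)
    have h0 : ∫ x, (v j - f j x) ∂(μ j) = 0 := by
      rw [integral_sub (integrable_const _) (hf j), integral_const]
      simp [hvdef]
    have hz := (integral_eq_zero_iff_of_nonneg_ae
      (hae.mono fun x hx => sub_nonneg.2 hx.le) hint).1 h0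
    have hbad : ∀ᵐ x ∂(μ j), False := by
      filter_upwards [hae, hz] with x h1 h2
      simp only [Pi.zero_apply] at h2
      linarith
    haveI : (ae (μ j)).NeBot := ae_neBot.2 (IsProbabilityMeasure.ne_zero (μ j))
    exact hbad.exists.elim fun _ hx => hx
  choose y0 hy0K hy0v using hy
  set V : ℝ := ∑ j, v j with hVdef
  -- Step 2: V ≤ M
  have hVM : V ≤ M := by
    refine le_trans ?_ (hbound y0 hy0K)
    exact Finset.sum_le_sum fun j _ => hy0v j
  -- Step 3: |V| ≤ C via the product integral
  have hIntj : ∀ j, Integrable (fun y : Fin d → ℝ => f j (y j)) (Measure.pi μ) := fun j =>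
    ((aux_measurePreserving_eval μ j).integrable_comp (hf j).1).2 (hf j)
  have hIntS : Integrable (fun y : Fin d → ℝ => ∑ j, f j (y j)) (Measure.pi μ) :=
    integrable_finset_sum _ fun j _ => hIntj j
  have hintV : ∫ y, (∑ j, f j (y j)) ∂(Measure.pi μ) = V := by
    rw [integral_finset_sum _ fun j _ => hIntj j]
    refine Finset.sum_congr rfl fun j _ => ?_
    have hmapeq := (aux_measurePreserving_eval μ j).map_eq
    have hsm : AEStronglyMeasurable (f j) ((Measure.pi μ).map (Function.eval j)) :=
      hmapeq ▸ (hf j).1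
    have := integral_map (μ := Measure.pi μ) (φ := Function.eval j) (f := f j) (measurable_pi_apply j).aemeasurable hsm
    rw [hmapeq] at this
    exact this.symm
  have hVC : |V| ≤ C := by
    rw [← hintV]
    calc |∫ y, (∑ j, f j (y j)) ∂(Measure.pi μ)|
        ≤ ∫ y, |∑ j, f j (y j)| ∂(Measure.pi μ) := by
          simpa using norm_integral_le_integral_norm (fun y : Fin d → ℝ => ∑ j, f j (y j))
      _ ≤ C := hC
  -- Step 4: pointwise bound on K i : f i x - v i ≤ M - V
  have hptwise : ∀ x ∈ K i, f i x - v i ≤ M - V := by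
    intro x hx
    have hmem : ∀ j, Function.update y0 i x j ∈ K j := by
      intro j
      rcases eq_or_ne j i with rfl | hj
      · simpa using hx
      · simpa [Function.update_of_ne hj] using hy0K j
    have hsum := hbound _ hmem
    have hsplit : ∑ j, f j (Function.update y0 i x j)
        = f i x + ∑ j ∈ Finset.univ.erase i, f j (y0 j) := by
      rw [← Finset.add_sum_erase _ _ (Finset.mem_univ i)]
      congr 1
      · simp
      · exact Finset.sum_congr rfl fun j hj =>
          by rw [Function.update_of_ne (Finset.ne_of_mem_erase hj)]
    have hVsplit : V = v i + ∑ j ∈ Finset.univ.erase i, v j :=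
      (Finset.add_sum_erase _ _ (Finset.mem_univ i)).symm
    have hge : ∑ j ∈ Finset.univ.erase i, v j ≤ ∑ j ∈ Finset.univ.erase i, f j (y0 j) :=
      Finset.sum_le_sum fun j _ => hy0v j
    rw [hsplit] at hsum
    linarith
  -- Step 5: a.e. bound and conclusion
  set g : ℝ → ℝ := fun x => f i x - v i with hgdef
  have hgint : Integrable g (μ i) := (hf i).sub (integrable_const _)
  have hgns : NullMeasurableSet {x | g x ≤ M - V} (μ i) :=
    ((hgint.1.aemeasurable).nullMeasurable) measurableSet_Iic
  have hgae : ∀ᵐ x ∂(μ i), g x ≤ M - V :=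
    aux_ae_of_full (hK i) hgns hptwise
  have hgzero : ∫ x, g x ∂(μ i) = 0 := by
    rw [hgdef]
    rw [integral_sub (hf i) (integrable_const _), integral_const]
    simp [hvdef]
  have hpos_int : Integrable (fun x => max (g x) 0) (μ i) := hgint.pos_part
  have habs : ∀ x, |g x| = 2 * max (g x) 0 - g x := by
    intro x
    rcases le_or_gt 0 (g x) with h | h
    · rw [abs_of_nonneg h, max_eq_left h]; ring
    · rw [abs_of_neg h, max_eq_right h.le]; ring
  have hintabs : ∫ x, |g x| ∂(μ i) = 2 * ∫ x, max (g x) 0 ∂(μ i) := by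
    simp_rw [habs]
    rw [integral_sub (hpos_int.const_mul 2) hgint, integral_const_mul, hgzero, sub_zero]
  have hposle : ∫ x, max (g x) 0 ∂(μ i) ≤ M - V := by
    have : ∀ᵐ x ∂(μ i), max (g x) 0 ≤ M - V := by
      filter_upwards [hgae] with x hx
      exact max_le hx (by linarith)
    calc ∫ x, max (g x) 0 ∂(μ i) ≤ ∫ _, (M - V) ∂(μ i) :=
          integral_mono_ae hpos_int (integrable_const _) this
      _ = M - V := by simp
  have hfinal : ∫ x, |g x| ∂(μ i) ≤ 2 * (M + C) := by
    rw [hintabs]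
    have : M - V ≤ M + C := by
      have := abs_le.1 hVC
      linarith [this.1]
    nlinarith [hposle]
  exact hfinal
end
end

section
/- Let N ≥ 2, d ≥ 1, let c : (ℝ^d)^N → ℝ, and let φ_t : ℝ^d → ℝ and h_t : ℝ^{td} → ℝ^d (with h_N ≡ 0) satisfy Σ_{t=1}^N ( φ_t(x_t) + h_t(x_1,…,x_t)·(x_{t+1} − x_t) ) ≤ c(x) for all x = (x_1,…,x_N) ∈ (ℝ^d)^N. Define backward recursively H_N(x_1,…,x_N) := c(x) and, for t = N−1, …, 1, H_t(x_1,…,x_t, y) := conv[ z ↦ H_{t+1}(x_1,…,x_t, z, z) − φ_{t+1}(z) ](y), where conv[g] denotes the supremum of all affine functions ℓ : ℝ^d → ℝ with ℓ ≤ g (−∞ if none exist), and where H_{t+1}(x_1,…,x_t, z, z) means H_{t+1} evaluated with both its (t+1)-st and (t+2)-nd block arguments equal to z (for t = N−1 this is just c(x_1,…,x_{N−1}, z)). Then for every t ∈ {1,…,N−1} and all (x_1,…,x_{t+1}) ∈ (ℝ^d)^{t+1}: Σ_{s=1}^t ( φ_s(x_s) + h_s(x_1,…,x_s)·(x_{s+1}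 − x_s) ) ≤ H_t(x_1,…,x_t, x_{t+1}) ≤ H_{t+1}(x_1,…,x_t, x_{t+1}, x_{t+1}) − φ_{t+1}(x_{t+1}). -/
open Filter

noncomputable section

/-- Euclidean dot product on ℝ^d. -/
def dotp {d : ℕ} (u v : Fin d → ℝ) : ℝ := ∑ i, u i * v i

/-- The lower semi-continuous convex envelope: the pointwise supremum of all affine
minorants (⊥ if there are none). -/
def convEnv (d : ℕ) (g : (Fin d → ℝ) → EReal) : (Fin d → ℝ) → EReal :=
  fun x => ⨆ l : {p : (Fin d → ℝ) × ℝ // ∀ z, ((dotp p.1 z + p.2 : ℝ) : EReal) ≤ g z},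
    ((dotp l.val.1 x + l.val.2 : ℝ) : EReal)

lemma dotp_sub {d : ℕ} (u v w : Fin d → ℝ) : dotp u (v - w) = dotp u v - dotp u w := by
  simp [dotp, mul_sub, Finset.sum_sub_distrib]

lemma dotp_zero {d : ℕ} (v : Fin d → ℝ) : dotp (0 : Fin d → ℝ) v = 0 := by simp [dotp]

lemma convEnv_le (d : ℕ) (g : (Fin d → ℝ) → EReal) (y : Fin d → ℝ) : convEnv d g y ≤ g y :=
  iSup_le fun l => l.2 y

lemma le_convEnv (d : ℕ) (g : (Fin d → ℝ) → EReal) (u : Fin d → ℝ) (b : ℝ)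
    (hub : ∀ z, ((dotp u z + b : ℝ) : EReal) ≤ g z) (y : Fin d → ℝ) :
    ((dotp u y + b : ℝ) : EReal) ≤ convEnv d g y :=
  le_iSup (fun l : {q : (Fin d → ℝ) × ℝ // ∀ z, ((dotp q.1 z + q.2 : ℝ) : EReal) ≤ g z} =>
    ((dotp l.val.1 y + l.val.2 : ℝ) : EReal)) ⟨(u, b), hub⟩

lemma coe_le_sub' {a b : ℝ} {C : EReal} (h : ((a + b : ℝ) : EReal) ≤ C) :
    (a : EReal) ≤ C - (b : EReal) := by
  induction C using EReal.rec with
  | bot => simp at h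
  | top => simp
  | coe c =>
      rw [← EReal.coe_sub]
      have := EReal.coe_le_coe_iff.mp h
      exact EReal.coe_le_coe_iff.mpr (by linarith)

lemma snoc_eval {α : Type*} {n : ℕ} (f : Fin n → α) (z : α) {j : ℕ} (hj : j < n) {hj' : j < n + 1} :
    (Fin.snoc f z : Fin (n+1) → α) ⟨j, hj'⟩ = f ⟨j, hj⟩ := by
  have : (⟨j, hj'⟩ : Fin (n+1)) = Fin.castSucc ⟨j, hj⟩ := rfl
  rw [this, Fin.snoc_castSucc]

lemma snoc_last' {α : Type*} {n : ℕ} (f : Fin n → α) (z : α) {hj' : n < n + 1} :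
    (Fin.snoc f z : Fin (n+1) → α) ⟨n, hj'⟩ = z := by
  have : (⟨n, hj'⟩ : Fin (n+1)) = Fin.last n := rfl
  rw [this, Fin.snoc_last]

def term (d : ℕ) (φ : ℕ → (Fin d → ℝ) → ℝ)
    (h : (s : ℕ) → (Fin s → (Fin d → ℝ)) → (Fin d → ℝ))
    {n : ℕ} (p : Fin (n + 1) → Fin d → ℝ) (s : Fin n) : ℝ :=
  φ (s.val + 1) (p ⟨s.val, by have := s.isLt; omega⟩) +
    dotp (h (s.val + 1)
        (fun j : Fin (s.val + 1) => p ⟨j.val, by have := j.isLt; have := s.isLt; omega⟩))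
      (p ⟨s.val + 1, by have := s.isLt; omega⟩ - p ⟨s.val, by have := s.isLt; omega⟩)

lemma term_congr (d : ℕ) (φ : ℕ → (Fin d → ℝ) → ℝ)
    (h : (s : ℕ) → (Fin s → (Fin d → ℝ)) → (Fin d → ℝ))
    {n m : ℕ} (p : Fin (n + 1) → Fin d → ℝ) (q : Fin (m + 1) → Fin d → ℝ)
    (s : Fin n) (s' : Fin m) (hss : s.val = s'.val)
    (hpq : ∀ j (hj : j < n + 1) (hj' : j < m + 1), j ≤ s.val + 1 → p ⟨j, hj⟩ = q ⟨j, hj'⟩) :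
    term d φ h p s = term d φ h q s' := by
  obtain ⟨v, hv⟩ := s
  obtain ⟨v', hv'⟩ := s'
  simp only at hss
  subst hss
  unfold term
  simp only
  rw [hpq v (by omega) (by omega) (Nat.le_succ _), hpq (v+1) (by omega) (by omega) (le_refl _)]
  have : (fun j : Fin (v + 1) => p ⟨j.val, by have := j.isLt; omega⟩)
      = (fun j : Fin (v + 1) => q ⟨j.val, by have := j.isLt; omega⟩) := by
    funext j
    exact hpq j.val (by have := j.isLt; omega) (by have := j.isLt; omega) (Nat.le_succ_of_le (Nat.le_of_lt_succ j.isLt))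
  rw [this]

/-- The backward-recursive convexified functions H_t dominate the partial portfolio
sums and satisfy H_t(x̄_t, x_{t+1}) ≤ H_{t+1}(x̄_{t+1}, x_{t+1}) − φ_{t+1}(x_{t+1}). -/
theorem backward_envelope_bounds (N d : ℕ) (hN : 2 ≤ N) (hd : 1 ≤ d)
    (c : (Fin N → Fin d → ℝ) → ℝ)
    (φ : ℕ → (Fin d → ℝ) → ℝ)
    (h : (s : ℕ) → (Fin s → (Fin d → ℝ)) → (Fin d → ℝ))
    (hhN : ∀ p, h N p = 0)
    (hsub : ∀ x : Fin N → Fin d → ℝ,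
      (∑ t : Fin N, (φ (t.val + 1) (x t) +
        if ht : t.val + 1 < N then
          dotp (h (t.val + 1)
              (fun j : Fin (t.val + 1) => x ⟨j.val, by have := j.isLt; have := t.isLt; omega⟩))
            (x ⟨t.val + 1, ht⟩ - x t)
        else 0)) ≤ c x)
    (H : (t : ℕ) → (Fin t → (Fin d → ℝ)) → (Fin d → ℝ) → EReal)
    (hHN : ∀ (p : Fin N → Fin d → ℝ) (y : Fin d → ℝ), H N p y = ((c p : ℝ) : EReal))
    (hHrec : ∀ t, 1 ≤ t → t ≤ N - 1 → ∀ (p : Fin t → Fin d → ℝ) (y : Fin d → ℝ),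
      H t p y =
        convEnv d (fun z => H (t + 1) (Fin.snoc p z) z - ((φ (t + 1) z : ℝ) : EReal)) y) :
    ∀ t, 1 ≤ t → t ≤ N - 1 → ∀ p : Fin (t + 1) → Fin d → ℝ,
      (((∑ s : Fin t, (φ (s.val + 1) (p ⟨s.val, by have := s.isLt; omega⟩) +
          dotp (h (s.val + 1)
              (fun j : Fin (s.val + 1) => p ⟨j.val, by have := j.isLt; have := s.isLt; omega⟩))
            (p ⟨s.val + 1, by have := s.isLt; omega⟩ - p ⟨s.val, by have := s.isLt; omega⟩))) : ℝ) : EReal)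
        ≤ H t (fun j : Fin t => p ⟨j.val, by have := j.isLt; omega⟩) (p (Fin.last t)) ∧
      H t (fun j : Fin t => p ⟨j.val, by have := j.isLt; omega⟩) (p (Fin.last t))
        ≤ H (t + 1) (Fin.snoc (fun j : Fin t => p ⟨j.val, by have := j.isLt; omega⟩) (p (Fin.last t)))
            (p (Fin.last t))
          - ((φ (t + 1) (p (Fin.last t)) : ℝ) : EReal) := by
  have base : ∀ p : Fin (N + 1) → Fin d → ℝ,
      ((∑ s : Fin N, term d φ h p s : ℝ) : EReal)
        ≤ H N (fun j : Fin N => p ⟨j.val, by have := j.isLt; omega⟩) (p (Fin.last N)) := by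
    intro p
    rw [hHN]
    have h1 := hsub (fun j : Fin N => p ⟨j.val, by have := j.isLt; omega⟩)
    refine le_trans (EReal.coe_le_coe_iff.mpr (le_of_eq ?_)) (EReal.coe_le_coe_iff.mpr h1)
    refine Finset.sum_congr rfl fun s _ => ?_
    by_cases hs : s.val + 1 < N
    · rw [dif_pos hs]
      rfl
    · rw [dif_neg hs]
      obtain ⟨v, hv⟩ := s
      simp only at hs ⊢
      have hvN : v + 1 = N := by omega
      subst hvN
      unfold term
      rw [hhN, dotp_zero]
  have step : ∀ t, 1 ≤ t → t ≤ N - 1 →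
      (∀ p : Fin (t + 2) → Fin d → ℝ,
        ((∑ s : Fin (t + 1), term d φ h p s : ℝ) : EReal)
          ≤ H (t + 1) (fun j : Fin (t + 1) => p ⟨j.val, by have := j.isLt; omega⟩)
              (p (Fin.last (t + 1)))) →
      ∀ p : Fin (t + 1) → Fin d → ℝ,
        ((∑ s : Fin t, term d φ h p s : ℝ) : EReal)
          ≤ H t (fun j : Fin t => p ⟨j.val, by have := j.isLt; omega⟩) (p (Fin.last t)) := by
    intro t ht1 htN Pnext p
    obtain ⟨m, rfl⟩ : ∃ m, t = m + 1 := ⟨t - 1, by omega⟩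
    rw [hHrec (m + 1) ht1 htN]
    set A : Fin (m + 1) → Fin d → ℝ :=
      (fun j : Fin (m + 1) => p ⟨j.val, by have := j.isLt; omega⟩) with hA
    set u : Fin d → ℝ := h (m + 1) A with hu
    set S : ℝ := ∑ s : Fin (m + 1), term d φ h p s with hS
    -- claim: lower bound along the modified path
    have claim : ∀ z : Fin d → ℝ,
        (((∑ s : Fin (m + 1), term d φ h (Fin.snoc A z) s) + φ (m + 1 + 1) z : ℝ) : EReal)
          ≤ H (m + 1 + 1) (Fin.snoc A z) z := by
      intro z
      have hP := Pnext (Fin.snoc (Fin.snoc A z) z)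
      have e2 : (Fin.snoc (Fin.snoc A z) z : Fin (m + 1 + 2) → Fin d → ℝ) (Fin.last (m + 1 + 1))
          = z := by
        have e : (Fin.last (m + 1 + 1)) = (⟨m + 1 + 1, by omega⟩ : Fin (m + 1 + 2)) := rfl
        rw [e, snoc_last']
      have e1 : (fun j : Fin (m + 1 + 1) =>
          (Fin.snoc (Fin.snoc A z) z : Fin (m + 1 + 2) → Fin d → ℝ)
            ⟨j.val, by have := j.isLt; omega⟩) = Fin.snoc A z := by
        funext j
        exact snoc_eval _ _ j.isLt
      rw [e1, e2] at hP
      rw [Fin.sum_univ_castSucc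
        (f := fun s : Fin (m + 1 + 1) => term d φ h (Fin.snoc (Fin.snoc A z) z) s)] at hP
      have e3 : term d φ h (Fin.snoc (Fin.snoc A z) z) (Fin.last (m + 1)) = φ (m + 1 + 1) z := by
        show φ (m + 1 + 1) ((Fin.snoc (Fin.snoc A z) z : Fin (m + 1 + 2) → Fin d → ℝ)
              ⟨m + 1, by omega⟩) +
            dotp (h (m + 1 + 1) (fun j : Fin (m + 1 + 1) =>
              (Fin.snoc (Fin.snoc A z) z : Fin (m + 1 + 2) → Fin d → ℝ)
                ⟨j.val, by have := j.isLt; omega⟩))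
            ((Fin.snoc (Fin.snoc A z) z : Fin (m + 1 + 2) → Fin d → ℝ) ⟨m + 1 + 1, by omega⟩ -
             (Fin.snoc (Fin.snoc A z) z : Fin (m + 1 + 2) → Fin d → ℝ) ⟨m + 1, by omega⟩)
            = φ (m + 1 + 1) z
        rw [snoc_last', snoc_eval (Fin.snoc A z) z (show m + 1 < m + 1 + 1 by omega)]
        have e4 : (Fin.snoc A z : Fin (m + 1 + 1) → Fin d → ℝ) ⟨m + 1, by omega⟩ = z := snoc_last' A z
        rw [e4, sub_self]
        simp [dotp]
      rw [e3] at hP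
      refine le_trans (le_of_eq ?_) hP
      rw [EReal.coe_eq_coe_iff]
      congr 1
      refine Finset.sum_congr rfl fun s _ => ?_
      refine term_congr d φ h _ _ s s.castSucc rfl (fun j hj hj' hle => ?_)
      rw [snoc_eval (Fin.snoc A z) z (by have := s.isLt; omega : j < m + 1 + 1)]
    -- sum splits
    have hsplitz : ∀ z : Fin d → ℝ, (∑ s : Fin (m + 1), term d φ h (Fin.snoc A z) s)
        = (∑ s : Fin m, term d φ h p s.castSucc)
          + (φ (m + 1) (p ⟨m, by omega⟩) + dotp u (z - p ⟨m, by omega⟩)) := by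
      intro z
      rw [Fin.sum_univ_castSucc]
      congr 1
      · refine Finset.sum_congr rfl fun s _ => ?_
        refine term_congr d φ h _ _ s.castSucc s.castSucc rfl (fun j hj hj' hle => ?_)
        have hcs : (Fin.castSucc s).val = s.val := rfl
        rw [snoc_eval A z (by have := s.isLt; omega : j < m + 1), hA]
      · show φ (m + 1) ((Fin.snoc A z : Fin (m + 1 + 1) → Fin d → ℝ) ⟨m, by omega⟩) +
            dotp (h (m + 1) (fun j : Fin (m + 1) =>
              (Fin.snoc A z : Fin (m + 1 + 1) → Fin d → ℝ) ⟨j.val, by have := j.isLt; omega⟩))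
            ((Fin.snoc A z : Fin (m + 1 + 1) → Fin d → ℝ) ⟨m + 1, by omega⟩ -
             (Fin.snoc A z : Fin (m + 1 + 1) → Fin d → ℝ) ⟨m, by omega⟩)
            = φ (m + 1) (p ⟨m, by omega⟩) + dotp u (z - p ⟨m, by omega⟩)
        have e5 : (fun j : Fin (m + 1) =>
            (Fin.snoc A z : Fin (m + 1 + 1) → Fin d → ℝ) ⟨j.val, by have := j.isLt; omega⟩)
            = A := by
          funext j
          exact snoc_eval _ _ j.isLt
        rw [snoc_last', snoc_eval A z (show m < m + 1 by omega), e5, hA]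
    have hsplitS : S = (∑ s : Fin m, term d φ h p s.castSucc)
        + (φ (m + 1) (p ⟨m, by omega⟩) + dotp u (p (Fin.last (m + 1)) - p ⟨m, by omega⟩)) := by
      rw [hS, Fin.sum_univ_castSucc]
      congr 1
    have key : ∀ z : Fin d → ℝ, ((dotp u z + (S - dotp u (p (Fin.last (m + 1)))) : ℝ) : EReal)
        ≤ H (m + 1 + 1) (Fin.snoc A z) z - ((φ (m + 1 + 1) z : ℝ) : EReal) := by
      intro z
      have h2 := coe_le_sub' (claim z)
      refine le_trans (le_of_eq ?_) h2
      rw [EReal.coe_eq_coe_iff, hsplitz z, hsplitS, dotp_sub, dotp_sub]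
      ring
    have final := le_convEnv d _ u (S - dotp u (p (Fin.last (m + 1)))) key (p (Fin.last (m + 1)))
    refine le_trans (le_of_eq ?_) final
    rw [EReal.coe_eq_coe_iff]
    ring
  have main : ∀ k t, 1 ≤ t → t + k = N → ∀ p : Fin (t + 1) → Fin d → ℝ,
      ((∑ s : Fin t, term d φ h p s : ℝ) : EReal)
        ≤ H t (fun j : Fin t => p ⟨j.val, by have := j.isLt; omega⟩) (p (Fin.last t)) := by
    intro k
    induction k with
    | zero =>
        intro t ht1 htN p
        have : t = N := by omega
        subst this
        exact base p
    | succ k ih =>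
        intro t ht1 htN p
        exact step t ht1 (by omega) (fun q => ih (t + 1) (by omega) (by omega) q) p
  intro t ht1 htN p
  refine ⟨main (N - t) t ht1 (by omega) p, ?_⟩
  rw [hHrec t ht1 htN]
  exact convEnv_le d _ _
end
end

section
/- Let N ≥ 2, d ≥ 1, let μ = (μ_{t,i})_{t∈{1,…,N}, i∈{1,…,d}} be probability measures on ℝ with finite first moments, and let π ∈ VMT(μ). For t ∈ {1,…,N−1} let χ_{t+1} : ℝ^d → ℝ be convex functions with χ_{t+1}(X_t) and χ_{t+1}(X_{t+1}) π-integrable, let ξ_t : ℝ^d → ℝ^d be measurable functions with ξ_t(x) ∈ ∂χ_{t+1}(x) for every x, and let h_t : ℝ^{td} → ℝ^d be bounded measurable functions. Assume ξ_t(X_t)·(X_{t+1} − X_t) is π-integrable for each t. Then E_π[ Σ_{t=1}^{N−1} ( χ_{t+1}(X_t) − χ_{t+1}(X_{t+1}) + h_t(X_1,…,X_t)·(X_{t+1} − X_t) ) ] = E_π[ Σ_{t=1}^{N−1} ( χ_{t+1}(X_t) − χ_{t+1}(X_{t+1}) + ξ_t(X_t)·(X_{t+1} − X_t) ) ] ≤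 0. -/
open MeasureTheory Filter

noncomputable section

/-- Vectorial martingale transports. -/
def VMT (N d : ℕ) (μ : Fin N → Fin d → Measure ℝ) :
    Set (Measure (Fin N → Fin d → ℝ)) :=
  {π | IsProbabilityMeasure π ∧
    (∀ t i, π.map (fun x => x t i) = μ t i) ∧
    ∀ (t : ℕ) (ht : t + 1 < N),
      π[(fun x => x ⟨t + 1, ht⟩) |
        MeasurableSpace.comap
          (fun (x : Fin N → Fin d → ℝ) (s : Fin (t + 1)) =>
            x ⟨s.val, by have := s.isLt; omega⟩) inferInstance]
        =ᵐ[π] fun x => x ⟨t, by omega⟩}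

/-!
A trading term `G(X₀, …, X_t) ⬝ (X_{t+1} - X_t)` with `G` measurable has mean zero: the factor
`G(X₀, …, X_t)` is measurable for the past, so it can be pulled out of the conditional expectation
given the past, and what remains is `E[X_{t+1} - X_t | X₀, …, X_t] = 0`. The pull-out only needs the
product to be integrable, so this covers the unbounded subgradient terms `ξ(X_t)` as well as the
bounded `h`. Hence both expectations equal `∑ₜ E[χ(X_t) - χ(X_{t+1})]`. The inequality holds
pointwise: each summand is nonpositive by the subgradient inequality `χ(x) + ξ(x) ⬝ (y - x) ≤ χ(y)`.
-/

def dotpL (d : ℕ) : (Fin d → ℝ) →L[ℝ] (Fin d → ℝ) →L[ℝ] ℝ :=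
  ∑ i, (ContinuousLinearMap.mul ℝ ℝ).bilinearComp (.proj i) (.proj i)

@[simp]
lemma dotpL_apply {d : ℕ} (u v : Fin d → ℝ) : dotpL d u v = dotp u v := by
  simp [dotpL, dotp]

lemma Fin.measurable_take {E : Type*} [MeasurableSpace E] {N : ℕ} (t : ℕ) (ht : t ≤ N) :
    Measurable (Fin.take t ht : (Fin N → E) → Fin t → E) :=
  measurable_pi_lambda _ fun _ => measurable_pi_apply _

namespace MeasureTheory

variable {Ω : Type*} {m m0 : MeasurableSpace Ω} {μ : Measure Ω}

lemma integral_bilin_eq_zero_of_condExp_eq_zero {E F G : Type*} [NormedAddCommGroup E]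
    [NormedSpace ℝ E] [NormedAddCommGroup F] [NormedSpace ℝ F] [CompleteSpace F]
    [NormedAddCommGroup G] [NormedSpace ℝ G] [CompleteSpace G] (hm : m ≤ m0)
    [SigmaFinite (μ.trim hm)] (B : E →L[ℝ] F →L[ℝ] G) {f : Ω → E} {g : Ω → F}
    (hf : AEStronglyMeasurable[m] f μ) (hg : Integrable g μ)
    (hfg : Integrable (fun x => B (f x) (g x)) μ) (hgm : μ[g|m] =ᵐ[μ] 0) :
    ∫ x, B (f x) (g x) ∂μ = 0 :=
  calc ∫ x, B (f x) (g x) ∂μ = ∫ x, μ[fun x => B (f x) (g x)|m] x ∂μ :=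
        (integral_condExp hm).symm
    _ = ∫ _, (0 : G) ∂μ := integral_congr_ae <|
        (condExp_bilin_of_aestronglyMeasurable_left B hf hfg hg).trans <|
          hgm.mono fun x hx => by simp [hx]
    _ = 0 := integral_zero _ _

lemma Integrable.bdd_dotp {d : ℕ} {F D : Ω → Fin d → ℝ} {C : ℝ} (hD : Integrable D μ)
    (hF : AEStronglyMeasurable F μ) (hFC : ∀ᵐ x ∂μ, ‖F x‖ ≤ C) :
    Integrable (fun x => dotp (F x) (D x)) μ :=
  integrable_finsetSum _ fun i _ =>
    (hD.eval i).bdd_mul ((continuous_apply i).comp_aestronglyMeasurable hF) <|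
      hFC.mono fun x hx => (norm_le_pi_norm (F x) i).trans hx

lemma integral_finset_sum_add_eq_of_integral_eq_zero {E ι : Type*} [NormedAddCommGroup E]
    [NormedSpace ℝ E] (s : Finset ι) {f g : ι → Ω → E} (hf : ∀ i ∈ s, Integrable (f i) μ)
    (hg : ∀ i ∈ s, Integrable (g i) μ) (hg0 : ∀ i ∈ s, ∫ x, g i x ∂μ = 0) :
    ∫ x, ∑ i ∈ s, (f i x + g i x) ∂μ = ∑ i ∈ s, ∫ x, f i x ∂μ := by
  rw [integral_finsetSum (f := fun i x => f i x + g i x) s fun i hi => (hf i hi).add (hg i hi)]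
  refine Finset.sum_congr rfl fun i hi => ?_
  rw [integral_add (hf i hi) (hg i hi), hg0 i hi, add_zero]

end MeasureTheory

namespace VMT

variable {N d : ℕ} {μ : Fin N → Fin d → Measure ℝ} {π : Measure (Fin N → Fin d → ℝ)}

abbrev pastMeasurableSpace (d t : ℕ) (ht : t + 1 ≤ N) : MeasurableSpace (Fin N → Fin d → ℝ) :=
  MeasurableSpace.comap (Fin.take (t + 1) ht) inferInstance

lemma integrable_eval (hπ : π ∈ VMT N d μ) (hmom : ∀ t i, Integrable id (μ t i)) (t : Fin N) :
    Integrable (fun x => x t) π :=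
  Integrable.of_eval fun i => by
    have hint := hmom t i
    rw [← hπ.2.1 t i] at hint
    exact hint.comp_measurable ((measurable_pi_apply i).comp (measurable_pi_apply t))

lemma integral_dotp_increment_eq_zero (hπ : π ∈ VMT N d μ) (hmom : ∀ t i, Integrable id (μ t i))
    {t : ℕ} (ht : t + 1 < N) {G : (Fin (t + 1) → Fin d → ℝ) → Fin d → ℝ} (hG : Measurable G)
    (hint : Integrable (fun x => dotp (G (Fin.take (t + 1) ht.le x))
      (x ⟨t + 1, ht⟩ - x ⟨t, by omega⟩)) π) :
    ∫ x, dotp (G (Fin.take (t + 1) ht.le x)) (x ⟨t + 1, ht⟩ - x ⟨t, by omega⟩) ∂π = 0 := by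
  have := hπ.1
  have htake : Measurable[pastMeasurableSpace d t ht.le]
      (Fin.take (t + 1) ht.le : (Fin N → Fin d → ℝ) → Fin (t + 1) → Fin d → ℝ) :=
    comap_measurable _
  have hm : pastMeasurableSpace d t ht.le ≤ MeasurableSpace.pi :=
    (Fin.measurable_take _ _).comap_le
  have hXt : StronglyMeasurable[pastMeasurableSpace d t ht.le]
      fun x : Fin N → Fin d → ℝ => x ⟨t, by omega⟩ :=
    ((measurable_pi_apply (Fin.last t)).comp htake).stronglyMeasurable
  have hmart : π[fun x => x ⟨t + 1, ht⟩ | pastMeasurableSpace d t ht.le]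
      =ᵐ[π] fun x => x ⟨t, by omega⟩ := hπ.2.2 t ht
  have hX₁ := integrable_eval hπ hmom ⟨t + 1, ht⟩
  have hX₀ := integrable_eval hπ hmom ⟨t, by omega⟩
  have hincrement : π[(fun x : Fin N → Fin d → ℝ => x ⟨t + 1, ht⟩) - (fun x => x ⟨t, by omega⟩) |
      pastMeasurableSpace d t ht.le] =ᵐ[π] 0 := by
    filter_upwards [condExp_sub hX₁ hX₀ (pastMeasurableSpace d t ht.le), hmart] with x hsub hx
    simp [hsub, hx, condExp_of_stronglyMeasurable hm hXt hX₀]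
  simpa using integral_bilin_eq_zero_of_condExp_eq_zero hm (dotpL d)
    (hG.comp htake).aestronglyMeasurable (hX₁.sub hX₀) (by simpa using hint) hincrement

end VMT

/-- Under a vectorial martingale transport, the dynamic trading terms h_t can be
replaced by subgradients ξ_t of the convex functions χ_{t+1} without changing the
expectation, and the resulting expectation is nonpositive. -/
theorem trading_term_substitution (N d : ℕ)
    (μ : Fin N → Fin d → Measure ℝ)
    (hmom : ∀ t i, Integrable id (μ t i))
    (π : Measure (Fin N → Fin d → ℝ)) (hπ : π ∈ VMT N d μ)
    (χ : ℕ → (Fin d → ℝ) → ℝ)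
    (hχint : ∀ (u : ℕ) (hu : u + 1 < N),
      Integrable (fun x => χ (u + 2) (x ⟨u, by omega⟩)) π ∧
      Integrable (fun x => χ (u + 2) (x ⟨u + 1, hu⟩)) π)
    (ξ : ℕ → (Fin d → ℝ) → (Fin d → ℝ))
    (hξm : ∀ (u : ℕ), u + 1 < N → Measurable (ξ (u + 1)))
    (hξsub : ∀ (u : ℕ), u + 1 < N → ∀ x y : Fin d → ℝ,
      χ (u + 2) x + dotp (ξ (u + 1) x) (y - x) ≤ χ (u + 2) y)
    (hξint : ∀ (u : ℕ) (hu : u + 1 < N),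
      Integrable (fun x => dotp (ξ (u + 1) (x ⟨u, by omega⟩))
        (x ⟨u + 1, hu⟩ - x ⟨u, by omega⟩)) π)
    (h : (s : ℕ) → (Fin s → Fin d → ℝ) → (Fin d → ℝ))
    (hhm : ∀ (u : ℕ), u + 1 < N → Measurable (h (u + 1)))
    (hhb : ∀ (u : ℕ), u + 1 < N → ∃ B : ℝ, ∀ p, ‖h (u + 1) p‖ ≤ B) :
    (∫ x, (∑ u : Fin (N - 1),
        (χ (u.val + 2) (x ⟨u.val, by have := u.isLt; omega⟩) -
          χ (u.val + 2) (x ⟨u.val + 1, by have := u.isLt; omega⟩) +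
          dotp (h (u.val + 1)
              (fun j : Fin (u.val + 1) => x ⟨j.val, by have := j.isLt; have := u.isLt; omega⟩))
            (x ⟨u.val + 1, by have := u.isLt; omega⟩ - x ⟨u.val, by have := u.isLt; omega⟩))) ∂π)
      = (∫ x, (∑ u : Fin (N - 1),
        (χ (u.val + 2) (x ⟨u.val, by have := u.isLt; omega⟩) -
          χ (u.val + 2) (x ⟨u.val + 1, by have := u.isLt; omega⟩) +
          dotp (ξ (u.val + 1) (x ⟨u.val, by have := u.isLt; omega⟩))
            (x ⟨u.val + 1, by have := u.isLt; omega⟩ - x ⟨u.val, by have := u.isLt; omega⟩))) ∂π) ∧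
    (∫ x, (∑ u : Fin (N - 1),
        (χ (u.val + 2) (x ⟨u.val, by have := u.isLt; omega⟩) -
          χ (u.val + 2) (x ⟨u.val + 1, by have := u.isLt; omega⟩) +
          dotp (ξ (u.val + 1) (x ⟨u.val, by have := u.isLt; omega⟩))
            (x ⟨u.val + 1, by have := u.isLt; omega⟩ - x ⟨u.val, by have := u.isLt; omega⟩))) ∂π)
      ≤ 0 := by
  have hu : ∀ u : Fin (N - 1), u.val + 1 < N := fun u => by omega
  have hχ : ∀ u ∈ Finset.univ, Integrable (fun x : Fin N → Fin d → ℝ =>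
      χ (u.val + 2) (x ⟨u.val, by omega⟩) - χ (u.val + 2) (x ⟨u.val + 1, hu u⟩)) π :=
    fun u _ => (hχint u (hu u)).1.sub (hχint u (hu u)).2
  have hhint : ∀ u : Fin (N - 1), Integrable (fun x : Fin N → Fin d → ℝ =>
      dotp (h (u.val + 1) (Fin.take (u.val + 1) (hu u).le x))
        (x ⟨u.val + 1, hu u⟩ - x ⟨u.val, by omega⟩)) π := fun u =>
    have ⟨_, hB⟩ := hhb u (hu u)
    ((VMT.integrable_eval hπ hmom _).sub (VMT.integrable_eval hπ hmom _)).bdd_dotp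
      ((hhm u (hu u)).comp (Fin.measurable_take _ _)).aestronglyMeasurable
      (.of_forall fun _ => hB _)
  refine ⟨?_, integral_nonpos fun x => Finset.sum_nonpos fun u _ => ?_⟩
  · have hh := integral_finset_sum_add_eq_of_integral_eq_zero _ hχ (fun u _ => hhint u)
      fun u _ => VMT.integral_dotp_increment_eq_zero hπ hmom (hu u) (hhm u (hu u)) (hhint u)
    have hξ := integral_finset_sum_add_eq_of_integral_eq_zero _ hχ (fun u _ => hξint u (hu u))
      fun u _ => VMT.integral_dotp_increment_eq_zero hπ hmom (hu u)
        ((hξm u (hu u)).comp (measurable_pi_apply (Fin.last u))) (hξint u (hu u))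
    exact hh.trans hξ.symm
  · linarith [hξsub u (hu u) (x ⟨u, by omega⟩) (x ⟨u + 1, hu u⟩)]
end
end
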